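/- arXiv:0709.2587 — 3 statements merged into one kernel-verified Lean document; each statement's English description precedes it below -/
import Mathlib

section
/- Let d ≥ 2, let L ⊆ ℝ^d be a full-rank lattice and let V ∈ (0, 2^d·det L]. Then for every K ∈ K_L with vol K = V one has diam K_L(V) ≤ diam K; that is, among all centrally symmetric convex bodies of volume V with no nonzero lattice point of L in their interior, the body K_L(V) = B_d(r_L(V)) ∩ DV(2L) has minimum diameter. -/
/-!
Translating the pieces `K ∩ (y + DV(2L))`, `y ∈ 2L`, back into `DV(2L)` gives sets that are
almost disjoint (a common interior point of two translates of `K` by `y₁ ≠ y₂` would put the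
nonzero lattice point `(y₁ - y₂) / 2` into the interior of `K`, by symmetry and convexity) and
that lie in `B(diam K / 2)`, because `K ⊆ B(diam K / 2)` by symmetry and a point of `DV(2L)` is
no longer than any of its translates by `2L`. Hence `vol K ≤ vol (B(diam K / 2) ∩ DV(2L))`.
On the other hand `DV(2L)` is convex, contains a ball around the origin and has points of every
norm below `2μ(L)`, so `ρ ↦ vol (B(ρ) ∩ DV(2L))` is strictly increasing on `[0, 2μ(L)]`.
Comparing with `vol (B(r) ∩ DV(2L)) = vol K` gives `r ≤ diam K / 2`, and `diam K_L(V) ≤ 2r`.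
-/

open MeasureTheory Metric

section Lattice

variable {ι : Type*} [Fintype ι] [DecidableEq ι]

noncomputable def Matrix.columnLattice (A : Matrix ι ι ℝ) (hA : IsUnit A.det) :
    Submodule ℤ (EuclideanSpace ℝ ι) :=
  Submodule.span ℤ
    (Set.range ((PiLp.basisFun 2 ℝ ι).map (A.toLinearEquiv (PiLp.basisFun 2 ℝ ι) hA)))

instance (A : Matrix ι ι ℝ) (hA : IsUnit A.det) : DiscreteTopology (A.columnLattice hA) := by
  unfold Matrix.columnLattice; infer_instance

theorem Matrix.mem_columnLattice {A : Matrix ι ι ℝ} {hA : IsUnit A.det} {x : EuclideanSpace ℝ ι} :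
    x ∈ A.columnLattice hA ↔ ∃ z : ι → ℤ, x = WithLp.toLp 2 (A.mulVec fun i => (z i : ℝ)) := by
  rw [Matrix.columnLattice, ← ZSpan.map, Submodule.mem_map]
  constructor
  · rintro ⟨y, hy, rfl⟩
    rw [Module.Basis.mem_span_iff_repr_mem] at hy
    choose z hz using hy
    refine ⟨z, ?_⟩
    obtain rfl : y = WithLp.toLp 2 fun i => (z i : ℝ) := by
      ext i
      simpa using (hz i).symm
    simp [← Matrix.toLpLin_eq_toLin]
  · rintro ⟨z, rfl⟩
    refine ⟨WithLp.toLp 2 fun i => (z i : ℝ), ?_, ?_⟩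
    · rw [Module.Basis.mem_span_iff_repr_mem]
      intro i
      simp
    · simp [← Matrix.toLpLin_eq_toLin]

theorem Matrix.coe_columnLattice_smul {A : Matrix ι ι ℝ} (hA : IsUnit A.det) {c : ℝ}
    (hcA : IsUnit (c • A).det) :
    ((c • A).columnLattice hcA : Set (EuclideanSpace ℝ ι)) = (c • ·) '' A.columnLattice hA := by
  ext x
  simp only [SetLike.mem_coe, Set.mem_image, Matrix.mem_columnLattice]
  constructor
  · rintro ⟨z, rfl⟩
    exact ⟨_, ⟨z, rfl⟩, by simp [Matrix.smul_mulVec]⟩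
  · rintro ⟨_, ⟨z, rfl⟩, rfl⟩
    exact ⟨z, by simp [Matrix.smul_mulVec]⟩

end Lattice

section Voronoi

variable {E : Type*} [NormedAddCommGroup E]

def voronoiCell (Λ : Set E) : Set E := {x | ∀ y ∈ Λ, ‖x‖ ≤ ‖x - y‖}

theorem isClosed_voronoiCell (Λ : Set E) : IsClosed (voronoiCell Λ) := by
  simp only [voronoiCell, Set.ofPred_forall]
  exact isClosed_biInter fun y _ =>
    isClosed_le continuous_norm (continuous_id.sub continuous_const).norm

theorem convex_voronoiCell [InnerProductSpace ℝ E] (Λ : Set E) : Convex ℝ (voronoiCell Λ) := by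
  have : voronoiCell Λ = ⋂ y ∈ Λ, {x | innerSL ℝ y x ≤ ‖y‖ ^ 2 / 2} := by
    ext x
    simp only [voronoiCell, Set.mem_ofPred_eq, Set.mem_iInter, innerSL_apply_apply]
    refine forall₂_congr fun y _ => ?_
    rw [← sq_le_sq₀ (norm_nonneg _) (norm_nonneg _), norm_sub_sq_real, real_inner_comm]
    constructor <;> intro h <;> linarith
  rw [this]
  exact convex_iInter₂ fun y _ => convex_halfSpace_le (innerSL ℝ y).toLinearMap.isLinear _

theorem sub_mem_voronoiCell_of_infDist_eq_dist {Λ : Submodule ℤ E} {x y : E} (hy : y ∈ Λ)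
    (hxy : infDist x Λ = dist x y) : x - y ∈ voronoiCell (Λ : Set E) := fun z hz => by
  rw [← dist_eq_norm, ← hxy, sub_sub, ← dist_eq_norm]
  exact infDist_le_dist_of_mem (Λ.add_mem hy hz)

variable (Λ : Submodule ℤ E) [DiscreteTopology Λ]

theorem Submodule.isClosed_of_discrete : IsClosed (Λ : Set E) :=
  AddSubgroup.isClosed_of_discrete (H := Λ.toAddSubgroup)

theorem zero_mem_interior_voronoiCell : (0 : E) ∈ interior (voronoiCell (Λ : Set E)) := by
  obtain ⟨ε, hε, hΛ⟩ := Metric.isOpen_singleton_iff.1 (isOpen_discrete ({0} : Set Λ))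
  refine mem_interior_iff_mem_nhds.2 (Filter.mem_of_superset (ball_mem_nhds 0 (half_pos hε)) ?_)
  intro x hx y hy
  rw [mem_ball_zero_iff] at hx
  by_cases hy0 : y = 0
  · simp [hy0]
  have : ε ≤ ‖y‖ := by
    by_contra! h
    exact hy0 (congrArg Subtype.val (hΛ ⟨y, hy⟩ (by simpa using h)))
  linarith [norm_sub_norm_le y x, norm_sub_rev x y]

variable [ProperSpace E]

theorem exists_sub_mem_voronoiCell (x : E) : ∃ y ∈ Λ, x - y ∈ voronoiCell (Λ : Set E) :=
  have ⟨y, hy, hxy⟩ := Λ.isClosed_of_discrete.exists_infDist_eq_dist ⟨0, Λ.zero_mem⟩ x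
  ⟨y, hy, sub_mem_voronoiCell_of_infDist_eq_dist hy hxy⟩

theorem exists_mem_voronoiCell_norm_eq_infDist (x : E) :
    ∃ p ∈ voronoiCell (Λ : Set E), ‖p‖ = infDist x Λ :=
  have ⟨y, hy, hxy⟩ := Λ.isClosed_of_discrete.exists_infDist_eq_dist ⟨0, Λ.zero_mem⟩ x
  ⟨x - y, sub_mem_voronoiCell_of_infDist_eq_dist hy hxy, by rw [hxy, dist_eq_norm]⟩

end Voronoi

section ConvexBody

variable {E : Type*} [NormedAddCommGroup E] [NormedSpace ℝ E] {K : Set E}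

theorem subset_closedBall_half_diam (hK : Bornology.IsBounded K) (hKsymm : -K = K) :
    K ⊆ closedBall 0 (diam K / 2) := by
  intro x hx
  have hnx : -x ∈ K := by rw [← hKsymm]; simpa using hx
  have h := dist_le_diam_of_mem hK hx hnx
  rw [dist_eq_norm, sub_neg_eq_add, ← two_smul ℝ x, norm_smul, Real.norm_two] at h
  rw [mem_closedBall_zero_iff]
  linarith

theorem Convex.inv_two_smul_sub_mem_interior (hK : Convex ℝ K) (hKsymm : -K = K) {u v : E}
    (hu : u ∈ interior K) (hv : v ∈ interior K) : (2⁻¹ : ℝ) • (u - v) ∈ interior K := by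
  have hnv : -v ∈ interior K := by
    rw [← hKsymm]
    change -v ∈ interior (Homeomorph.neg E ⁻¹' K)
    rw [← (Homeomorph.neg E).preimage_interior]
    simpa using hv
  have := hK.interior hu hnv (by norm_num : (0 : ℝ) ≤ 2⁻¹) (by norm_num : (0 : ℝ) ≤ 2⁻¹)
    (by norm_num)
  rwa [← smul_add, ← sub_eq_add_neg] at this

theorem Convex.measure_closedBall_inter_lt [MeasurableSpace E] [OpensMeasurableSpace E]
    [ProperSpace E] (μ : Measure E) [μ.IsOpenPosMeasure] [IsFiniteMeasureOnCompacts μ]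
    {C : Set E} (hC : Convex ℝ C) (h0 : (0 : E) ∈ interior C) {p : E} (hp : p ∈ C) {a b : ℝ}
    (ha : 0 ≤ a) (hap : a < ‖p‖) (hab : a < b) :
    μ (closedBall 0 a ∩ C) < μ (closedBall 0 b ∩ C) := by
  set t := (a + min ‖p‖ b) / 2 / ‖p‖
  have hp0 : 0 < ‖p‖ := ha.trans_lt hap
  have ht0 : 0 ≤ t := by
    have := lt_min hp0 (ha.trans_lt hab)
    positivity
  have hq : ‖t • p‖ = (a + min ‖p‖ b) / 2 := by
    rw [norm_smul, Real.norm_of_nonneg ht0, div_mul_cancel₀ _ hp0.ne']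
  have ht1 : t < 1 := by
    rw [div_lt_one hp0]
    linarith [min_le_left ‖p‖ b, lt_min hap hab]
  have hqC : t • p ∈ interior C := by
    simpa using hC.combo_interior_self_mem_interior h0 hp (sub_pos.2 ht1) ht0
      (sub_add_cancel 1 t)
  set U := interior C ∩ ball 0 b ∩ (closedBall 0 a)ᶜ
  have hqU : t • p ∈ U := by
    refine ⟨⟨hqC, ?_⟩, ?_⟩
    · rw [mem_ball_zero_iff, hq]
      linarith [min_le_right ‖p‖ b, lt_min hap hab]
    · rw [Set.mem_compl_iff, mem_closedBall_zero_iff, hq, not_le]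
      linarith [lt_min hap hab]
  have hUopen : IsOpen U :=
    (isOpen_interior.inter isOpen_ball).inter isClosed_closedBall.isOpen_compl
  calc μ (closedBall 0 a ∩ C)
      < μ (closedBall 0 a ∩ C) + μ U :=
        ENNReal.lt_add_right
          ((measure_mono Set.inter_subset_left).trans_lt measure_closedBall_lt_top).ne
          (hUopen.measure_pos μ ⟨_, hqU⟩).ne'
    _ = μ (closedBall 0 a ∩ C ∪ U) :=
        (measure_union (Set.disjoint_left.2 fun x hx hxU => hxU.2 hx.1) hUopen.measurableSet).symm
    _ ≤ μ (closedBall 0 b ∩ C) := by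
        refine measure_mono (Set.union_subset ?_ ?_)
        · exact Set.inter_subset_inter_left _ (closedBall_subset_closedBall hab.le)
        · exact fun x hx => ⟨ball_subset_closedBall hx.1.2, interior_subset hx.1.1⟩

end ConvexBody

section Packing

variable {E : Type*} [NormedAddCommGroup E] [NormedSpace ℝ E] {K : Set E} {Λ : Submodule ℤ E}

theorem Convex.disjoint_preimage_add_interior (hK : Convex ℝ K) (hKsymm : -K = K)
    (hKΛ : ∀ y ∈ Λ, y ≠ 0 → (2⁻¹ : ℝ) • y ∉ interior K) {y₁ y₂ : E} (h₁ : y₁ ∈ Λ) (h₂ : y₂ ∈ Λ)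
    (hne : y₁ ≠ y₂) : Disjoint ((· + y₁) ⁻¹' interior K) ((· + y₂) ⁻¹' interior K) :=
  Set.disjoint_left.2 fun w hw₁ hw₂ => hKΛ _ (Λ.sub_mem h₁ h₂) (sub_ne_zero.2 hne) <| by
    simpa using hK.inv_two_smul_sub_mem_interior hKsymm hw₁ hw₂

variable [FiniteDimensional ℝ E] [MeasurableSpace E] [BorelSpace E] (μ : Measure E)
  [μ.IsAddHaarMeasure] [DiscreteTopology Λ]

theorem measure_le_measure_closedBall_inter_voronoiCell (hKc : IsCompact K)
    (hK : Convex ℝ K) (hKsymm : -K = K) (hKΛ : ∀ y ∈ Λ, y ≠ 0 → (2⁻¹ : ℝ) • y ∉ interior K) :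
    μ K ≤ μ (closedBall 0 (diam K / 2) ∩ voronoiCell (Λ : Set E)) := by
  set P : Λ → Set E := fun y => (· + (y : E)) ⁻¹' K ∩ voronoiCell (Λ : Set E)
  have hcover : K ⊆ ⋃ y : Λ, (· + (y : E)) '' P y := by
    intro x hx
    obtain ⟨y, hy, hxy⟩ := exists_sub_mem_voronoiCell Λ x
    exact Set.mem_iUnion.2 ⟨⟨y, hy⟩, x - y, ⟨by simpa using hx, hxy⟩, sub_add_cancel x y⟩
  have hP_sub : ∀ y, P y ⊆ closedBall 0 (diam K / 2) ∩ voronoiCell (Λ : Set E) := by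
    rintro ⟨y, hy⟩ w ⟨hwK, hw⟩
    refine ⟨?_, hw⟩
    have hwy := subset_closedBall_half_diam hKc.isBounded hKsymm hwK
    have hvor := hw _ (Λ.neg_mem hy)
    rw [mem_closedBall_zero_iff] at hwy ⊢
    rw [sub_neg_eq_add] at hvor
    exact hvor.trans hwy
  have hP_meas : ∀ y, MeasurableSet (P y) := fun y =>
    ((hKc.isClosed.preimage (continuous_add_const _)).inter
      (isClosed_voronoiCell _)).measurableSet
  have hP_disj : Pairwise (Function.onFun (AEDisjoint μ) P) := by
    intro y₁ y₂ hne
    have hfr : ∀ y : E, μ ((· + y) ⁻¹' frontier K) = 0 := fun y => by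
      rw [measure_preimage_add_right, hK.addHaar_frontier μ]
    refine measure_mono_null (fun w ⟨⟨hw₁, _⟩, ⟨hw₂, _⟩⟩ => ?_)
      (measure_union_null (hfr y₁) (hfr y₂))
    rw [Set.mem_union, Set.mem_preimage, Set.mem_preimage, hKc.isClosed.frontier_eq]
    by_cases h₁ : w + y₁ ∈ interior K
    · exact Or.inr ⟨hw₂, Set.disjoint_left.1 (hK.disjoint_preimage_add_interior hKsymm hKΛ
        y₁.2 y₂.2 (Subtype.coe_injective.ne hne)) h₁⟩
    · exact Or.inl ⟨hw₁, h₁⟩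
  have : Countable Λ := countable_of_Lindelof_of_discrete
  calc μ K ≤ μ (⋃ y : Λ, (· + (y : E)) '' P y) := measure_mono hcover
    _ ≤ ∑' y : Λ, μ ((· + (y : E)) '' P y) := measure_iUnion_le _
    _ = ∑' y : Λ, μ (P y) := by simp only [Set.image_add_right, measure_preimage_add_right]
    _ = μ (⋃ y, P y) := (measure_iUnion₀ hP_disj fun y => (hP_meas y).nullMeasurableSet).symm
    _ ≤ _ := measure_mono (Set.iUnion_subset hP_sub)

end Packing

theorem isodiametric_lattice_min_diam_general
    (d : ℕ)
    (A : Matrix (Fin d) (Fin d) ℝ) (hA : IsUnit A.det)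
    (L : Set (EuclideanSpace ℝ (Fin d)))
    (hL : L = {x | ∃ z : Fin d → ℤ, x = WithLp.toLp 2 (A.mulVec (fun i => (z i : ℝ)))})
    -- `DV2L` is the Dirichlet–Voronoi cell of the lattice `2L`
    (DV2L : Set (EuclideanSpace ℝ (Fin d)))
    (hDV : DV2L = {x | ∀ y ∈ L, ‖x‖ ≤ ‖x - (2 : ℝ) • y‖})
    -- `μ` is the covering radius (inhomogeneous minimum) of `L`
    (μ : ℝ) (hμ : μ = ⨆ x : EuclideanSpace ℝ (Fin d), infDist x L)
    (V : ℝ)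
    -- `r = r_L(V)`, the unique radius in `(0, 2μ(L)]` such that
    -- `vol (B_d(r) ∩ DV(2L)) = V`
    (r : ℝ) (hrμ : r ≤ 2 * μ)
    (hrV : volume (closedBall (0 : EuclideanSpace ℝ (Fin d)) r ∩ DV2L)
      = ENNReal.ofReal V)
    -- `K ∈ K_L` with `vol K = V`
    (K : Set (EuclideanSpace ℝ (Fin d)))
    (hKcpt : IsCompact K) (hKconv : Convex ℝ K) (hKsymm : K = -K)
    (hKadm : ∀ y ∈ L, y ≠ 0 → y ∉ interior K)
    (hKvol : volume K = ENNReal.ofReal V) :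
    diam (closedBall (0 : EuclideanSpace ℝ (Fin d)) r ∩ DV2L) ≤ diam K := by
  have h2A : IsUnit ((2 : ℝ) • A).det := by simpa [Matrix.det_smul] using hA
  set Λ := ((2 : ℝ) • A).columnLattice h2A
  have hLΛ : L = A.columnLattice hA := by
    ext x
    rw [hL, SetLike.mem_coe, Matrix.mem_columnLattice, Set.mem_ofPred_eq]
  have hΛ : (Λ : Set _) = ((2 : ℝ) • ·) '' L := by rw [hLΛ, Matrix.coe_columnLattice_smul hA]
  have hDVΛ : DV2L = voronoiCell (Λ : Set _) := by
    rw [hDV, hΛ]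
    simp only [voronoiCell, Set.forall_mem_image]
  have hKΛ : ∀ y ∈ Λ, y ≠ 0 → (2⁻¹ : ℝ) • y ∉ interior K := by
    intro y hy hy0
    obtain ⟨x, hx, rfl⟩ : y ∈ ((2 : ℝ) • ·) '' L := hΛ ▸ hy
    rw [inv_smul_smul₀ two_ne_zero]
    exact hKadm x hx (by rintro rfl; simp at hy0)
  have hvol : volume (closedBall 0 r ∩ DV2L) ≤ volume (closedBall 0 (diam K / 2) ∩ DV2L) := by
    rw [hrV, ← hKvol, hDVΛ]
    exact measure_le_measure_closedBall_inter_voronoiCell volume hKcpt hKconv hKsymm.symm hKΛ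
  have hr : r ≤ diam K / 2 := by
    by_contra! hKr
    obtain ⟨w, hw⟩ : ∃ w, diam K / 2 / 2 < infDist w L :=
      exists_lt_of_lt_ciSup (hμ ▸ by linarith)
    obtain ⟨p, hp, hpw⟩ := exists_mem_voronoiCell_norm_eq_infDist Λ ((2 : ℝ) • w)
    rw [hΛ, Set.image_smul, infDist_smul₀ two_ne_zero, Real.norm_two] at hpw
    rw [hDVΛ] at hvol
    exact hvol.not_gt <| (convex_voronoiCell _).measure_closedBall_inter_lt volume
      (zero_mem_interior_voronoiCell Λ) hp (by positivity) (by linarith) hKr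
  calc diam (closedBall 0 r ∩ DV2L)
      ≤ diam (closedBall (0 : EuclideanSpace ℝ (Fin d)) (diam K / 2)) :=
        diam_mono (Set.inter_subset_left.trans (closedBall_subset_closedBall hr))
          isBounded_closedBall
    _ ≤ diam K := (diam_closedBall (by positivity)).trans_eq (by ring)

/-- The isodiametric problem with lattice-point constraints: the body
`K_L(V) = B_d(r_L(V)) ∩ DV(2L)` has minimum diameter among all centrally symmetric
convex bodies of volume `V` with no nonzero point of `L` in their interior. -/
theorem isodiametric_lattice_min_diam
    (d : ℕ) (hd : 2 ≤ d)
    (A : Matrix (Fin d) (Fin d) ℝ) (hA : IsUnit A.det)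
    (L : Set (EuclideanSpace ℝ (Fin d)))
    (hL : L = {x | ∃ z : Fin d → ℤ, x = WithLp.toLp 2 (A.mulVec (fun i => (z i : ℝ)))})
    -- `DV2L` is the Dirichlet–Voronoi cell of the lattice `2L`
    (DV2L : Set (EuclideanSpace ℝ (Fin d)))
    (hDV : DV2L = {x | ∀ y ∈ L, ‖x‖ ≤ ‖x - (2 : ℝ) • y‖})
    -- `μ` is the covering radius (inhomogeneous minimum) of `L`
    (μ : ℝ) (hμ : μ = ⨆ x : EuclideanSpace ℝ (Fin d), infDist x L)
    (V : ℝ) (hV0 : 0 < V) (hV1 : V ≤ 2 ^ d * |A.det|)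
    -- `r = r_L(V)`, the unique radius in `(0, 2μ(L)]` such that
    -- `vol (B_d(r) ∩ DV(2L)) = V`
    (r : ℝ) (hr0 : 0 < r) (hrμ : r ≤ 2 * μ)
    (hrV : volume (closedBall (0 : EuclideanSpace ℝ (Fin d)) r ∩ DV2L)
      = ENNReal.ofReal V)
    -- `K ∈ K_L` with `vol K = V`
    (K : Set (EuclideanSpace ℝ (Fin d)))
    (hKcpt : IsCompact K) (hKconv : Convex ℝ K) (hKsymm : K = -K)
    (hKadm : ∀ y ∈ L, y ≠ 0 → y ∉ interior K)
    (hKvol : volume K = ENNReal.ofReal V) :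
    diam (closedBall (0 : EuclideanSpace ℝ (Fin d)) r ∩ DV2L) ≤ diam K :=
  isodiametric_lattice_min_diam_general d A hA L hL DV2L hDV μ hμ V r hrμ hrV K hKcpt hKconv hKsymm
    hKadm hKvol
end

section
/- Let d ≥ 2, let L ⊆ ℝ^d be a full-rank lattice and let V ∈ (0, 2^d·det L] be such that r_L(V) ≤ λ(L). Then K_L(V) = B_d(r_L(V)), and the ball B_d(r_L(V)) is the unique extremal body: every K ∈ K_L with vol K = V and diam K = 2·r_L(V) satisfies K = B_d(r_L(V)). -/
/-!
When `r ≤ λ(L)`, the triangle inequality puts the ball `B_d(r)` inside the Voronoi cell of `2L`,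
so `K_L(V)` is the ball itself. An origin-symmetric body `K` of diameter `2r` lies in `B_d(r)`,
since `x, -x ∈ K` forces `2‖x‖ ≤ 2r`; if it also has the volume of the ball, then `B_d(r) \ K` is
null, and a closed subset of a ball missing only a null set is the whole ball, because the open
ball minus `K` is an open null set, hence empty.
-/

open MeasureTheory Metric

section Normed

variable {E : Type*} [SeminormedAddCommGroup E] [NormedSpace ℝ E]

theorem norm_le_norm_sub_two_smul {x y : E} (h : ‖x‖ ≤ ‖y‖) : ‖x‖ ≤ ‖x - (2 : ℝ) • y‖ := by
  have h2y : ‖(2 : ℝ) • y‖ = 2 * ‖y‖ := by rw [norm_smul, Real.norm_two]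
  have := norm_sub_norm_le ((2 : ℝ) • y) x
  rw [norm_sub_rev] at this
  linarith

theorem closedBall_subset_setOf_norm_le_norm_sub_two_smul {L : Set E} {r : ℝ}
    (hr : ∀ y ∈ L, y ≠ 0 → r ≤ ‖y‖) :
    closedBall (0 : E) r ⊆ {x | ∀ y ∈ L, ‖x‖ ≤ ‖x - (2 : ℝ) • y‖} := by
  intro x hx y hy
  rcases eq_or_ne y 0 with rfl | hy0
  · simp
  · exact norm_le_norm_sub_two_smul ((mem_closedBall_zero_iff.mp hx).trans (hr y hy hy0))

theorem subset_closedBall_of_neg_mem_of_diam_le {K : Set E} {r : ℝ} (hb : Bornology.IsBounded K)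
    (hneg : ∀ x ∈ K, -x ∈ K) (hdiam : diam K ≤ 2 * r) : K ⊆ closedBall (0 : E) r := by
  intro x hx
  have hdist : dist x (-x) = 2 * ‖x‖ := by
    rw [dist_eq_norm, sub_neg_eq_add, ← two_smul ℝ, norm_smul, Real.norm_two]
  have := dist_le_diam_of_mem hb hx (hneg x hx)
  exact mem_closedBall_zero_iff.mpr (by linarith)

theorem eq_closedBall_of_subset_of_measure_le [MeasurableSpace E] [OpensMeasurableSpace E]
    (μ : Measure E) [μ.IsOpenPosMeasure] {K : Set E} {x : E} {r : ℝ} (hr : r ≠ 0)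
    (hK : IsClosed K) (hsub : K ⊆ closedBall x r) (hvol : μ (closedBall x r) ≤ μ K)
    (hfin : μ K ≠ ⊤) : K = closedBall x r := by
  have hnull : μ (closedBall x r \ K) = 0 := by
    rw [measure_sdiff hsub hK.measurableSet.nullMeasurableSet hfin]
    exact tsub_eq_zero_of_le hvol
  have hempty : ball x r \ K = ∅ :=
    (isOpen_ball.sdiff hK).measure_eq_zero_iff μ |>.mp <|
      measure_mono_null (Set.sdiff_subset_sdiff_left ball_subset_closedBall) hnull
  refine hsub.antisymm ?_
  rw [← closure_ball x hr]
  exact closure_minimal (Set.sdiff_eq_empty.mp hempty) hK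

end Normed

theorem unique_extremal_small_radius_general
    (d : ℕ)
    (L : Set (EuclideanSpace ℝ (Fin d)))
    -- `DV2L` is the Dirichlet–Voronoi cell of the lattice `2L`
    (DV2L : Set (EuclideanSpace ℝ (Fin d)))
    (hDV : DV2L = {x | ∀ y ∈ L, ‖x‖ ≤ ‖x - (2 : ℝ) • y‖})
    (V : ℝ)
    -- `r = r_L(V)`
    (r : ℝ) (hr0 : 0 < r)
    (hrV : volume (closedBall (0 : EuclideanSpace ℝ (Fin d)) r ∩ DV2L)
      = ENNReal.ofReal V)
    -- `r_L(V) ≤ λ(L)`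
    (hrlam : ∀ y ∈ L, y ≠ 0 → r ≤ ‖y‖) :
    closedBall (0 : EuclideanSpace ℝ (Fin d)) r ∩ DV2L
      = closedBall (0 : EuclideanSpace ℝ (Fin d)) r ∧
    ∀ K : Set (EuclideanSpace ℝ (Fin d)),
      IsCompact K → Convex ℝ K → K = -K →
      (∀ y ∈ L, y ≠ 0 → y ∉ interior K) →
      volume K = ENNReal.ofReal V → diam K = 2 * r →
      K = closedBall (0 : EuclideanSpace ℝ (Fin d)) r := by
  have hball : closedBall (0 : EuclideanSpace ℝ (Fin d)) r ∩ DV2L = closedBall 0 r :=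
    Set.inter_eq_left.mpr (hDV ▸ closedBall_subset_setOf_norm_le_norm_sub_two_smul hrlam)
  refine ⟨hball, fun K hKc _ hKsym _ hKvol hKdiam => ?_⟩
  have hneg : ∀ x ∈ K, -x ∈ K := fun x hx => hKsym ▸ Set.neg_mem_neg.mpr hx
  refine eq_closedBall_of_subset_of_measure_le volume hr0.ne' hKc.isClosed
    (subset_closedBall_of_neg_mem_of_diam_le hKc.isBounded hneg hKdiam.le) ?_
    (hKvol ▸ ENNReal.ofReal_ne_top)
  rw [hKvol, ← hrV, hball]

/-- If `r_L(V) ≤ λ(L)` (the homogeneous minimum), then `K_L(V) = B_d(r_L(V))` and the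
ball is the unique extremal body. The hypothesis `r ≤ λ(L)` is expressed as
`r ≤ ‖y‖` for every nonzero `y ∈ L`. -/
theorem unique_extremal_small_radius
    (d : ℕ) (hd : 2 ≤ d)
    (A : Matrix (Fin d) (Fin d) ℝ) (hA : IsUnit A.det)
    (L : Set (EuclideanSpace ℝ (Fin d)))
    (hL : L = {x | ∃ z : Fin d → ℤ, x = WithLp.toLp 2 (A.mulVec (fun i => (z i : ℝ)))})
    -- `DV2L` is the Dirichlet–Voronoi cell of the lattice `2L`
    (DV2L : Set (EuclideanSpace ℝ (Fin d)))
    (hDV : DV2L = {x | ∀ y ∈ L, ‖x‖ ≤ ‖x - (2 : ℝ) • y‖})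
    -- `μ` is the covering radius (inhomogeneous minimum) of `L`
    (μ : ℝ) (hμ : μ = ⨆ x : EuclideanSpace ℝ (Fin d), infDist x L)
    (V : ℝ) (hV0 : 0 < V) (hV1 : V ≤ 2 ^ d * |A.det|)
    -- `r = r_L(V)`
    (r : ℝ) (hr0 : 0 < r) (hrμ : r ≤ 2 * μ)
    (hrV : volume (closedBall (0 : EuclideanSpace ℝ (Fin d)) r ∩ DV2L)
      = ENNReal.ofReal V)
    -- `r_L(V) ≤ λ(L)`
    (hrlam : ∀ y ∈ L, y ≠ 0 → r ≤ ‖y‖) :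
    closedBall (0 : EuclideanSpace ℝ (Fin d)) r ∩ DV2L
      = closedBall (0 : EuclideanSpace ℝ (Fin d)) r ∧
    ∀ K : Set (EuclideanSpace ℝ (Fin d)),
      IsCompact K → Convex ℝ K → K = -K →
      (∀ y ∈ L, y ≠ 0 → y ∉ interior K) →
      volume K = ENNReal.ofReal V → diam K = 2 * r →
      K = closedBall (0 : EuclideanSpace ℝ (Fin d)) r :=
  unique_extremal_small_radius_general d L DV2L hDV V r hr0 hrV hrlam
end

section
/- Let K ⊆ ℝ³ be a compact convex set with K = −K containing no nonzero integer point in its interior, and set D = diam K. If 2 ≤ D ≤ 2√2, then vol K ≤ 2π(−D³/6 + 3D²/4 − 1). -/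
open MeasureTheory Metric Real

/-!
If `2z + int K` and `2z' + int K` met for lattice points `z ≠ z'`, the midpoint `z - z'` of two
points of the convex symmetric set `int K` would be a nonzero integer point of `int K`. So the
translates `2z + int K`, `z ∈ ℤ³`, are pairwise disjoint, and cutting `int K` along the cubes
`2z + [-1,1)³` and moving the pieces back into `[-1,1)³` gives disjoint sets. Moving a point into
`[-1,1)³` along `2ℤ³` never increases its norm, and `K ⊆ B(D/2)` by symmetry, so
`vol K = vol (int K) ≤ vol (B(D/2) ∩ [-1,1)³)`. For `2 ≤ D ≤ 2√2` the six caps `±x_i > 1` of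
`B(D/2)` are pairwise disjoint, and subtracting their volumes `π (D/2 - 1)² (D + 1) / 3` from the
volume of the ball gives the bound.
-/

open scoped Pointwise in
theorem Convex.pairwise_disjoint_vadd_of_symmetric {E : Type*} [AddCommGroup E] [Module ℝ E]
    {L : AddSubgroup E} {s : Set E} (h_conv : Convex ℝ s) (h_symm : ∀ x ∈ s, -x ∈ s)
    (h_lat : ∀ x : L, x ≠ 0 → (2⁻¹ : ℝ) • (x : E) ∉ s) :
    Pairwise (Function.onFun Disjoint fun x : L => x +ᵥ s) := by
  intro x y hxy
  refine Set.disjoint_left.mpr ?_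
  rintro _ ⟨u, hu, rfl⟩ ⟨v, hv, huv⟩
  refine h_lat (y - x) (sub_ne_zero.2 hxy.symm) ?_
  have hyx : ((y - x : L) : E) = u - v := by
    simp only [AddSubgroup.vadd_def, vadd_eq_add] at huv
    rw [AddSubgroup.coe_sub]
    linear_combination (norm := abel) huv
  convert h_conv hu (h_symm v hv) (by norm_num : (0:ℝ) ≤ 2⁻¹) (by norm_num : (0:ℝ) ≤ 2⁻¹)
    (by norm_num) using 1
  rw [hyx, smul_sub, sub_eq_add_neg, smul_neg]

open scoped Pointwise in
theorem MeasureTheory.IsAddFundamentalDomain.measure_le_of_pairwise_disjoint_vadd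
    {G α : Type*} [AddGroup G] [Countable G] [AddAction G α] [MeasurableSpace α]
    [MeasurableSpace G] [MeasurableVAdd G α] {μ : Measure α} [VAddInvariantMeasure G α μ]
    {F s t : Set α} (fund : IsAddFundamentalDomain G F μ) (hs : NullMeasurableSet s μ)
    (hd : Pairwise (Function.onFun Disjoint fun g : G => g +ᵥ s))
    (ht : ∀ g : G, (g +ᵥ s) ∩ F ⊆ t) : μ s ≤ μ t :=
  calc μ s = ∑' g : G, μ ((g +ᵥ s) ∩ F) := fund.measure_eq_tsum s
    _ = μ (⋃ g : G, (g +ᵥ s) ∩ F) := (measure_iUnion₀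
        (hd.mono fun _ _ h => (h.mono Set.inter_subset_left Set.inter_subset_left).aedisjoint)
        fun _ => (hs.vadd _).inter fund.nullMeasurableSet).symm
    _ ≤ μ t := measure_mono (Set.iUnion_subset ht)

theorem Convex.addHaar_interior {E : Type*} [NormedAddCommGroup E] [NormedSpace ℝ E]
    [MeasurableSpace E] [BorelSpace E] [FiniteDimensional ℝ E] (μ : Measure E)
    [μ.IsAddHaarMeasure] {s : Set E} (hs : Convex ℝ s) : μ (interior s) = μ s := by
  refine le_antisymm (measure_mono interior_subset) ?_
  calc μ s ≤ μ (interior s ∪ frontier s) :=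
        measure_mono (subset_closure.trans (closure_eq_interior_union_frontier s).subset)
    _ ≤ μ (interior s) + μ (frontier s) := measure_union_le _ _
    _ = μ (interior s) := by rw [hs.addHaar_frontier μ, add_zero]

theorem neg_mem_interior_of_forall_neg_mem {E : Type*} [TopologicalSpace E] [InvolutiveNeg E]
    [ContinuousNeg E] {s : Set E} (h_symm : ∀ x ∈ s, -x ∈ s) {x : E} (hx : x ∈ interior s) :
    -x ∈ interior s := by
  have : Neg.neg ⁻¹' interior s ⊆ interior s :=
    interior_maximal (fun y hy => by simpa using h_symm _ (interior_subset hy))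
      (isOpen_interior.preimage continuous_neg)
  exact this (by simpa using hx)

theorem subset_closedBall_diam_div_two {E : Type*} [NormedAddCommGroup E] [NormedSpace ℝ E]
    {K : Set E} (hK : Bornology.IsBounded K) (h_symm : ∀ x ∈ K, -x ∈ K) :
    K ⊆ closedBall 0 (diam K / 2) := by
  intro x hx
  have h := dist_le_diam_of_mem hK hx (h_symm x hx)
  rw [dist_eq_norm, sub_neg_eq_add, ← two_smul ℝ x, norm_smul, Real.norm_two] at h
  rw [mem_closedBall_zero_iff]
  linarith

section EvenLattice

variable (ι : Type*)

def evenLatticeEmbedding : (ι → ℤ) →+ EuclideanSpace ℝ ι :=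
  AddMonoidHom.mk' (fun v => WithLp.toLp 2 fun i => 2 * (v i : ℝ)) fun v w => by
    ext i; simp only [Pi.add_apply, Int.cast_add, PiLp.add_apply]; ring

def evenLattice : AddSubgroup (EuclideanSpace ℝ ι) := (evenLatticeEmbedding ι).range

instance [Finite ι] : Countable (evenLattice ι) :=
  (Set.countable_range (evenLatticeEmbedding ι)).to_subtype

def cubeIco : Set (EuclideanSpace ℝ ι) := {x | ∀ i, x i ∈ Set.Ico (-1) 1}

variable {ι}

@[simp]
theorem evenLatticeEmbedding_apply (v : ι → ℤ) (i : ι) :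
    evenLatticeEmbedding ι v i = 2 * (v i : ℝ) := rfl

theorem measurableSet_cubeIco [Countable ι] : MeasurableSet (cubeIco ι) := by
  simp only [cubeIco, Set.ofPred_forall]
  exact MeasurableSet.iInter fun i => measurableSet_Ico.preimage (by fun_prop)

theorem two_mul_add_mem_Ico_iff (m : ℤ) (t : ℝ) :
    2 * (m : ℝ) + t ∈ Set.Ico (-1) 1 ↔ m = -⌊(t + 1) / 2⌋ := by
  rw [← neg_eq_iff_eq_neg, eq_comm, Int.floor_eq_iff, Set.mem_Ico]
  push_cast
  constructor <;> rintro ⟨h₁, h₂⟩ <;> constructor <;> linarith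

theorem isAddFundamentalDomain_cubeIco [Fintype ι] (μ : Measure (EuclideanSpace ℝ ι)) :
    IsAddFundamentalDomain (evenLattice ι) (cubeIco ι) μ := by
  refine .mk' measurableSet_cubeIco.nullMeasurableSet fun x => ?_
  refine ⟨⟨_, fun i => -⌊(x i + 1) / 2⌋, rfl⟩, fun i => (two_mul_add_mem_Ico_iff _ _).2 rfl, ?_⟩
  rintro ⟨_, v, rfl⟩ hv
  exact Subtype.ext <| congrArg (evenLatticeEmbedding ι) <|
    funext fun i => (two_mul_add_mem_Ico_iff _ _).1 (hv i)

theorem abs_le_abs_add_two_mul_of_mem_Ico {t : ℝ} (ht : t ∈ Set.Ico (-1) 1) (m : ℤ) :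
    |t| ≤ |t + 2 * m| := by
  rcases eq_or_ne m 0 with rfl | hm
  · simp
  have h1 : (1 : ℝ) ≤ |(m : ℝ)| := by exact_mod_cast Int.one_le_abs hm
  have h2 : |t| ≤ 1 := abs_le.2 ⟨ht.1, ht.2.le⟩
  have h3 : |(2 * m : ℝ)| - |t| ≤ |t + 2 * m| := by
    simpa [add_comm] using abs_sub_abs_le_abs_add (2 * (m : ℝ)) t
  rw [abs_mul, abs_two] at h3
  linarith

theorem norm_le_norm_add_of_mem_cubeIco [Fintype ι] {y g : EuclideanSpace ℝ ι}
    (hy : y ∈ cubeIco ι) (hg : g ∈ evenLattice ι) : ‖y‖ ≤ ‖y + g‖ := by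
  obtain ⟨v, rfl⟩ := hg
  simp only [EuclideanSpace.norm_eq]
  gcongr with i
  simpa [Real.norm_eq_abs] using abs_le_abs_add_two_mul_of_mem_Ico (hy i) (v i)

theorem volume_le_volume_closedBall_inter_cubeIco [Fintype ι]
    {K : Set (EuclideanSpace ℝ ι)} (h_conv : Convex ℝ K) (h_symm : ∀ x ∈ K, -x ∈ K)
    (h_lat : ∀ z : ι → ℤ, z ≠ 0 → WithLp.toLp 2 (fun i => (z i : ℝ)) ∉ interior K)
    {r : ℝ} (hKr : K ⊆ closedBall 0 r) :
    volume K ≤ volume (closedBall 0 r ∩ cubeIco ι) := by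
  rw [← h_conv.addHaar_interior volume]
  refine (isAddFundamentalDomain_cubeIco (volume : Measure (EuclideanSpace ℝ ι))
    ).measure_le_of_pairwise_disjoint_vadd isOpen_interior.measurableSet.nullMeasurableSet ?_ ?_
  · refine h_conv.interior.pairwise_disjoint_vadd_of_symmetric
      (fun x => neg_mem_interior_of_forall_neg_mem h_symm) ?_
    rintro ⟨_, v, rfl⟩ hv
    have hv0 : v ≠ 0 := by rintro rfl; exact hv (Subtype.ext (map_zero _))
    convert h_lat v hv0 using 2
    ext i
    simp
  · rintro ⟨g, hg⟩ _ ⟨⟨u, hu, rfl⟩, hy⟩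
    refine ⟨?_, hy⟩
    have := norm_le_norm_add_of_mem_cubeIco hy (neg_mem hg)
    simp only [AddSubgroup.vadd_def, vadd_eq_add, add_neg_cancel_comm] at this ⊢
    exact mem_closedBall_zero_iff.2 <|
      this.trans (mem_closedBall_zero_iff.1 (hKr (interior_subset hu)))

end EvenLattice

theorem EuclideanSpace.mem_closedBall_zero_iff_sum_sq_le {ι : Type*} [Fintype ι]
    {x : EuclideanSpace ℝ ι} {r : ℝ} (hr : 0 ≤ r) :
    x ∈ closedBall 0 r ↔ ∑ i, x i ^ 2 ≤ r ^ 2 := by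
  rw [mem_closedBall_zero_iff, ← sq_le_sq₀ (norm_nonneg x) hr, EuclideanSpace.real_norm_sq_eq]

theorem sq_add_sq_le_sum_sq {ι : Type*} [Fintype ι] (x : ι → ℝ) {i j : ι} (hij : i ≠ j) :
    x i ^ 2 + x j ^ 2 ≤ ∑ k, x k ^ 2 := by
  classical
  rw [← Finset.sum_pair (f := fun k => x k ^ 2) hij]
  exact Finset.sum_le_sum_of_subset_of_nonneg (Finset.subset_univ _) fun k _ _ => sq_nonneg _

theorem volume_setOf_sq_add_sq_le (s : ℝ) :
    volume {y : Fin 2 → ℝ | y 0 ^ 2 + y 1 ^ 2 ≤ s} = ENNReal.ofReal (π * s) := by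
  rcases lt_or_ge s 0 with hs | hs
  · have : {y : Fin 2 → ℝ | y 0 ^ 2 + y 1 ^ 2 ≤ s} = ∅ :=
      Set.eq_empty_of_forall_notMem fun y (hy : _ ≤ s) => by
        nlinarith [sq_nonneg (y 0), sq_nonneg (y 1)]
    rw [this, measure_empty, ENNReal.ofReal_of_nonpos (by nlinarith [pi_pos])]
  · have hball : WithLp.ofLp ⁻¹' {y : Fin 2 → ℝ | y 0 ^ 2 + y 1 ^ 2 ≤ s}
        = closedBall (0 : EuclideanSpace ℝ (Fin 2)) √s := by
      ext x
      rw [EuclideanSpace.mem_closedBall_zero_iff_sum_sq_le (sqrt_nonneg s), sq_sqrt hs,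
        Fin.sum_univ_two]
      rfl
    rw [← (EuclideanSpace.volume_preserving_symm_measurableEquiv_toLp (Fin 2)
      ).measure_preimage_equiv, MeasurableEquiv.coe_toLp_symm, hball,
      EuclideanSpace.volume_closedBall_fin_two, ← ENNReal.ofReal_pow (sqrt_nonneg s), sq_sqrt hs,
      ← ENNReal.ofReal_mul hs, mul_comm]

theorem volume_setOf_sum_sq_le_and_apply_mem (r : ℝ) (i : Fin 3) {S : Set ℝ}
    (hS : MeasurableSet S) :
    volume {x : Fin 3 → ℝ | ∑ j, x j ^ 2 ≤ r ^ 2 ∧ x i ∈ S}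
      = ∫⁻ t in S, ENNReal.ofReal (π * (r ^ 2 - t ^ 2)) := by
  let e := MeasurableEquiv.piFinSuccAbove (fun _ : Fin 3 => ℝ) i
  have hpre : e.symm ⁻¹' {x : Fin 3 → ℝ | ∑ j, x j ^ 2 ≤ r ^ 2 ∧ x i ∈ S}
      = {p : ℝ × (Fin 2 → ℝ) | p.2 0 ^ 2 + p.2 1 ^ 2 ≤ r ^ 2 - p.1 ^ 2 ∧ p.1 ∈ S} := by
    ext p
    simp only [Set.mem_preimage, Set.mem_ofPred_eq, e, MeasurableEquiv.piFinSuccAbove_symm_apply,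
      Fin.sum_univ_succAbove _ i]
    simp [Fin.insertNthEquiv, Fin.sum_univ_two, le_sub_iff_add_le']
  have hmeas : MeasurableSet
      {p : ℝ × (Fin 2 → ℝ) | p.2 0 ^ 2 + p.2 1 ^ 2 ≤ r ^ 2 - p.1 ^ 2 ∧ p.1 ∈ S} :=
    (measurableSet_le (f := fun p : ℝ × (Fin 2 → ℝ) => p.2 0 ^ 2 + p.2 1 ^ 2) (by fun_prop)
      (by fun_prop)).inter (measurable_fst hS)
  rw [← (volume_preserving_piFinSuccAbove (fun _ : Fin 3 => ℝ) i).symm.measure_preimage_equiv,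
    hpre, Measure.volume_eq_prod, Measure.prod_apply hmeas, ← lintegral_indicator hS]
  congr 1 with t
  by_cases ht : t ∈ S
  · simp [ht, ← volume_setOf_sq_add_sq_le]
  · simp [ht]

theorem volume_closedBall_inter_setOf_apply_mem {r : ℝ} (hr : 0 ≤ r) (i : Fin 3) {S : Set ℝ}
    (hS : MeasurableSet S) :
    volume (closedBall (0 : EuclideanSpace ℝ (Fin 3)) r ∩ {x | x i ∈ S})
      = ∫⁻ t in S, ENNReal.ofReal (π * (r ^ 2 - t ^ 2)) := by
  rw [← volume_setOf_sum_sq_le_and_apply_mem r i hS,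
    ← (EuclideanSpace.volume_preserving_symm_measurableEquiv_toLp (Fin 3)).measure_preimage_equiv]
  congr 1 with x
  simp only [Set.mem_inter_iff, EuclideanSpace.mem_closedBall_zero_iff_sum_sq_le hr]
  rfl

theorem lintegral_Ioi_ofReal_pi_mul_sq_sub_sq {r c : ℝ} (hrc : -r ≤ c) (hcr : c ≤ r) :
    ∫⁻ t in Set.Ioi c, ENNReal.ofReal (π * (r ^ 2 - t ^ 2))
      = ENNReal.ofReal (π * ((r - c) ^ 2 * (2 * r + c) / 3)) := by
  have h_out : ∫⁻ t in Set.Ioi r, ENNReal.ofReal (π * (r ^ 2 - t ^ 2)) = 0 := by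
    rw [setLIntegral_congr_fun measurableSet_Ioi (g := fun _ => 0) fun t (ht : r < t) =>
      ENNReal.ofReal_of_nonpos (mul_nonpos_of_nonneg_of_nonpos pi_nonneg (by nlinarith)),
      lintegral_zero]
  have h_in : ∫ t in Set.Ioc c r, π * (r ^ 2 - t ^ 2) = π * ((r - c) ^ 2 * (2 * r + c) / 3) := by
    rw [← intervalIntegral.integral_of_le hcr, intervalIntegral.integral_const_mul,
      intervalIntegral.integral_sub intervalIntegrable_const
        (intervalIntegral.intervalIntegrable_pow 2)]
    simp only [intervalIntegral.integral_const, integral_pow, smul_eq_mul]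
    ring
  rw [← Set.Ioc_union_Ioi_eq_Ioi hcr,
    lintegral_union measurableSet_Ioi (Set.Ioc_disjoint_Ioi le_rfl), h_out, add_zero, ← h_in,
    ofReal_integral_eq_lintegral_ofReal]
  · exact (by fun_prop : Continuous fun t : ℝ => π * (r ^ 2 - t ^ 2)).integrableOn_Icc.mono_set
      Set.Ioc_subset_Icc_self
  · refine (ae_restrict_iff' measurableSet_Ioc).2 (ae_of_all _ fun t ⟨ht₁, ht₂⟩ => ?_)
    exact mul_nonneg pi_nonneg (by nlinarith)

theorem volume_closedBall_inter_setOf_lt_apply {r c : ℝ} (hrc : -r ≤ c) (hcr : c ≤ r)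
    (i : Fin 3) :
    volume (closedBall (0 : EuclideanSpace ℝ (Fin 3)) r ∩ {x | c < x i})
      = ENNReal.ofReal (π * ((r - c) ^ 2 * (2 * r + c) / 3)) :=
  (volume_closedBall_inter_setOf_apply_mem (by linarith) i measurableSet_Ioi).trans
    (lintegral_Ioi_ofReal_pi_mul_sq_sub_sq hrc hcr)

theorem volume_closedBall_inter_setOf_lt_abs_apply {r c : ℝ} (hc : 0 ≤ c) (hcr : c ≤ r)
    (i : Fin 3) :
    volume (closedBall (0 : EuclideanSpace ℝ (Fin 3)) r ∩ {x | c < |x i|})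
      = 2 * ENNReal.ofReal (π * ((r - c) ^ 2 * (2 * r + c) / 3)) := by
  set cap := closedBall (0 : EuclideanSpace ℝ (Fin 3)) r ∩ {x | c < x i}
  have h_split : closedBall (0 : EuclideanSpace ℝ (Fin 3)) r ∩ {x | c < |x i|} = cap ∪ -cap := by
    ext x
    simp only [cap, Set.mem_union, Set.mem_neg, Set.mem_inter_iff, mem_closedBall_zero_iff,
      norm_neg, Set.mem_ofPred_eq, PiLp.neg_apply, lt_abs, lt_neg]
    tauto
  have h_disj : Disjoint cap (-cap) := by
    refine Set.disjoint_left.2 fun x hx hx' => ?_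
    have h₁ : c < x i := hx.2
    have h₂ : c < -x i := hx'.2
    linarith
  have h_meas : MeasurableSet (-cap) :=
    (measurableSet_closedBall.inter (measurableSet_lt measurable_const (by fun_prop))).neg
  rw [h_split, measure_union h_disj h_meas, Measure.measure_neg,
    volume_closedBall_inter_setOf_lt_apply (by linarith) hcr]
  exact (two_mul _).symm

theorem volume_closedBall_inter_cubeIco_le {r : ℝ} (hr₁ : 1 ≤ r) (hr₂ : r ^ 2 ≤ 2) :
    volume (closedBall (0 : EuclideanSpace ℝ (Fin 3)) r ∩ cubeIco (Fin 3))
      ≤ ENNReal.ofReal (π * (4 / 3 * r ^ 3 - 2 * ((r - 1) ^ 2 * (2 * r + 1)))) := by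
  set B := closedBall (0 : EuclideanSpace ℝ (Fin 3)) r
  set caps : Fin 3 → Set (EuclideanSpace ℝ (Fin 3)) := fun i => B ∩ {x | 1 < |x i|}
  have h_caps_vol (i : Fin 3) :
      volume (caps i) = 2 * ENNReal.ofReal (π * ((r - 1) ^ 2 * (2 * r + 1) / 3)) :=
    volume_closedBall_inter_setOf_lt_abs_apply zero_le_one hr₁ i
  have h_caps_meas (i : Fin 3) : MeasurableSet (caps i) :=
    measurableSet_closedBall.inter (measurableSet_lt measurable_const (by fun_prop))
  have h_caps_disj : Pairwise (Function.onFun Disjoint caps) := by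
    refine fun i j hij => Set.disjoint_left.2 fun x ⟨hxB, hi⟩ ⟨_, hj⟩ => ?_
    have hi' := (one_lt_sq_iff_one_lt_abs (x i)).2 hi
    have hj' := (one_lt_sq_iff_one_lt_abs (x j)).2 hj
    have := sq_add_sq_le_sum_sq (WithLp.ofLp x) hij
    have := (EuclideanSpace.mem_closedBall_zero_iff_sum_sq_le (by linarith)).1 hxB
    linarith
  have h_cube_disj : Disjoint (B ∩ cubeIco (Fin 3)) (⋃ i, caps i) := by
    refine Set.disjoint_iUnion_right.2 fun i => Set.disjoint_left.2 fun x ⟨_, hx⟩ ⟨_, hi⟩ => ?_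
    exact (abs_le.2 ⟨(hx i).1, (hx i).2.le⟩).not_gt hi
  have h_vol : volume (B ∩ cubeIco (Fin 3)) + ∑ i, volume (caps i) ≤ volume B := by
    calc _ = volume ((B ∩ cubeIco (Fin 3)) ∪ ⋃ i, caps i) := by
          rw [measure_union h_cube_disj (MeasurableSet.iUnion h_caps_meas),
            measure_iUnion h_caps_disj h_caps_meas, tsum_fintype]
      _ ≤ volume B := measure_mono (Set.union_subset Set.inter_subset_left
          (Set.iUnion_subset fun i => Set.inter_subset_left))
  have h_caps_total :
      ∑ i, volume (caps i) = ENNReal.ofReal (π * (2 * ((r - 1) ^ 2 * (2 * r + 1)))) := by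
    simp only [h_caps_vol, Finset.sum_const, Finset.card_univ, Fintype.card_fin, nsmul_eq_mul]
    rw [← ENNReal.ofReal_ofNat 2, ← ENNReal.ofReal_natCast, ← ENNReal.ofReal_mul (by norm_num),
      ← ENNReal.ofReal_mul (by norm_num)]
    ring_nf
  have h_ball_vol : volume B = ENNReal.ofReal (π * (4 / 3 * r ^ 3)) := by
    rw [EuclideanSpace.volume_closedBall_fin_three, ← ENNReal.ofReal_pow (by linarith),
      ← ENNReal.ofReal_mul (by positivity)]
    ring_nf
  rw [h_caps_total, h_ball_vol] at h_vol
  rw [mul_sub, ENNReal.ofReal_sub _ (by have := pi_pos; positivity)]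
  exact ENNReal.le_sub_of_add_le_right ENNReal.ofReal_ne_top h_vol

/-- Explicit isodiametric inequality for the integer lattice `ℤ³` in the range
`2 ≤ D ≤ 2√2`: every centrally symmetric convex body with no nonzero integer point
in its interior and diameter `D` satisfies `vol K ≤ 2π(-D³/6 + 3D²/4 - 1)`. -/
theorem isodiametric_Z3_middle_range
    (K : Set (EuclideanSpace ℝ (Fin 3)))
    (hKcpt : IsCompact K) (hKconv : Convex ℝ K) (hKsymm : K = -K)
    (hKadm : ∀ z : Fin 3 → ℤ,
      (fun i => (z i : ℝ)) ≠ (0 : EuclideanSpace ℝ (Fin 3)) →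
      WithLp.toLp 2 (fun i => (z i : ℝ)) ∉ interior K)
    (D : ℝ) (hD : D = diam K)
    (hD1 : 2 ≤ D) (hD2 : D ≤ 2 * Real.sqrt 2) :
    volume K ≤ ENNReal.ofReal (2 * π * (-(D ^ 3) / 6 + 3 * D ^ 2 / 4 - 1)) := by
  have h_symm : ∀ x ∈ K, -x ∈ K := fun x hx => by rwa [hKsymm, Set.mem_neg, neg_neg]
  have h_lat (z : Fin 3 → ℤ) (hz : z ≠ 0) : WithLp.toLp 2 (fun i => (z i : ℝ)) ∉ interior K :=
    hKadm z fun h => hz (funext fun i => by simpa using congrFun h i)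
  have h_ball : K ⊆ closedBall 0 (D / 2) :=
    hD ▸ subset_closedBall_diam_div_two hKcpt.isBounded h_symm
  have h_sq : (D / 2) ^ 2 ≤ 2 := by
    have : D ^ 2 ≤ (2 * √2) ^ 2 := pow_le_pow_left₀ (by linarith) hD2 2
    rw [mul_pow, sq_sqrt zero_le_two] at this
    linarith
  calc volume K ≤ volume (closedBall 0 (D / 2) ∩ cubeIco (Fin 3)) :=
        volume_le_volume_closedBall_inter_cubeIco hKconv h_symm h_lat h_ball
    _ ≤ _ := volume_closedBall_inter_cubeIco_le (by linarith) h_sq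
    _ = _ := by ring_nf
end
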